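/- arXiv:0908.2828 — 4 statements merged into one kernel-verified Lean document; each statement's English description precedes it below -/
import Mathlib

section
/- Let p ∈ [0,1]^n be a vector of source probabilities p_i = Pr(x_i = 1) for independent binary sources x_1,...,x_n, and let q ∈ [0,1]^n with test channels Q_i achieving the component rate-distortion functions R_i(D_i) with parameter s < 0. If the initial test-channel input distribution on the product space factorizes as q^(0)_K = Π_{i=1}^n q^(0)_{k_i}, then after each Blahut-Arimoto iteration t the distribution still factorizes: q^(t)_K = Π_i q^(t)_{k_i} and Q^(t)_{K|J} = Π_i Q^(t)_{k_i|j_i}. Consequently the rate and distortion of the product source satisfy R_s = Σ_{i=1}^n R_{i,s} and D_s = Σ_{i=1}^n D_{i,s}. -/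
/-- One Blahut–Arimoto update of the test-channel transition probabilities:
`Q_{k|j} = q_k exp(s δ(j,k)) / Σ_{k'} q_{k'} exp(s δ(j,k'))`. -/
noncomputable def BAQ {J K : Type} [Fintype K] (s : ℝ) (δ : J → K → ℝ)
    (q : K → ℝ) : J → K → ℝ :=
  fun j k => q k * Real.exp (s * δ j k) / ∑ k', q k' * Real.exp (s * δ j k')

/-- One Blahut–Arimoto update of the test-channel input distribution:
`q'_k = Σ_j p_j Q_{k|j}`. -/
noncomputable def BAq {J K : Type} [Fintype J] [Fintype K] (p : J → ℝ) (s : ℝ)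
    (δ : J → K → ℝ) (q : K → ℝ) : K → ℝ :=
  fun k => ∑ j, p j * BAQ s δ q j k

/-- The Blahut–Arimoto iterates `q^{(t)}` starting from `q^{(0)} = q0`. -/
noncomputable def BAiter {J K : Type} [Fintype J] [Fintype K] (p : J → ℝ) (s : ℝ)
    (δ : J → K → ℝ) (q0 : K → ℝ) : ℕ → K → ℝ
  | 0 => q0
  | t + 1 => BAq p s δ (BAiter p s δ q0 t)

/-!
The sum distortion of the product source makes `exp (s δ(J, K))` a product over the components,
so a factorized input distribution gives a factorized test channel, whose normaliser is a
product of the component normalisers; summing it against the product source gives a factorized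
next input distribution, and induction on `t` does the rest. Once the joint channel factorizes,
the output marginal factorizes too, so the logarithm in `R_s` and the distortion in `D_s` are
sums over components, and each summand depends on one component only; the other components
marginalise out because their input distributions and channel rows sum to one.
-/

open Finset

section ProductSums

variable {ι α J K : Type} [Fintype ι] [DecidableEq ι]

lemma sum_pi_prod_mul_prod [Fintype J] (a b : ι → J → ℝ) :
    ∑ x : ι → J, (∏ i, a i (x i)) * ∏ i, b i (x i) = ∏ i, ∑ j, a i j * b i j := by
  simp only [← prod_mul_distrib]
  exact (Fintype.prod_sum fun i j => a i j * b i j).symm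

lemma sum_pi_prod_mul_apply [Fintype α] (f : ι → α → ℝ) (hf : ∀ m, ∑ a, f m a = 1) (i : ι)
    (g : α → ℝ) : ∑ x : ι → α, (∏ m, f m (x m)) * g (x i) = ∑ a, f i a * g a := by
  -- absorb `g` into the `i`-th factor, expand the product of sums, and all other factors are 1
  set F := Function.update f i fun a => f i a * g a
  have hFi : F i = fun a => f i a * g a := Function.update_self ..
  have hF : ∀ m ∈ univ.erase i, F m = f m := fun m hm =>
    Function.update_of_ne (ne_of_mem_erase hm) _ _
  have hprod : ∀ x : ι → α, (∏ m, f m (x m)) * g (x i) = ∏ m, F m (x m) := fun x => by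
    rw [← mul_prod_erase _ _ (mem_univ i), ← mul_prod_erase _ _ (mem_univ i), hFi,
      prod_congr rfl fun m hm => congrFun (hF m hm) (x m)]
    ring
  calc ∑ x : ι → α, (∏ m, f m (x m)) * g (x i)
      = ∏ m, ∑ a, F m a := by simp only [hprod]; exact (Fintype.prod_sum F).symm
    _ = ∑ a, f i a * g a := by
      rw [← mul_prod_erase _ _ (mem_univ i), hFi,
        prod_eq_one fun m hm => by rw [hF m hm, hf], mul_one]

lemma sum_pi_pi_prod_mul_prod_mul_sum [Fintype J] [Fintype K] (p : ι → J → ℝ)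
    (Q : ι → J → K → ℝ) (hp : ∀ i, ∑ j, p i j = 1) (hQ : ∀ i j, ∑ k, Q i j k = 1)
    (g : ι → J → K → ℝ) :
    ∑ x : ι → J, ∑ y : ι → K,
        (∏ i, p i (x i)) * (∏ i, Q i (x i) (y i)) * ∑ i, g i (x i) (y i)
      = ∑ i, ∑ j, ∑ k, p i j * Q i j k * g i j k := by
  have hmarginal : ∀ i, ∑ x : ι → J, ∑ y : ι → K,
      (∏ i, p i (x i)) * (∏ i, Q i (x i) (y i)) * g i (x i) (y i)
        = ∑ j, ∑ k, p i j * Q i j k * g i j k := fun i => by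
    calc ∑ x : ι → J, ∑ y : ι → K,
          (∏ i, p i (x i)) * (∏ i, Q i (x i) (y i)) * g i (x i) (y i)
        = ∑ x : ι → J, (∏ i, p i (x i)) *
            ∑ y : ι → K, (∏ m, Q m (x m) (y m)) * g i (x i) (y i) := by
          simp only [mul_assoc, mul_sum]
      _ = ∑ x : ι → J, (∏ i, p i (x i)) * ∑ k, Q i (x i) k * g i (x i) k := by
          simp only [sum_pi_prod_mul_apply (fun m => Q m _) (fun m => hQ m _) i]
      _ = ∑ j, ∑ k, p i j * Q i j k * g i j k := by
          rw [sum_pi_prod_mul_apply p hp i fun j => ∑ k, Q i j k * g i j k]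
          simp only [mul_sum, mul_assoc]
  calc ∑ x : ι → J, ∑ y : ι → K,
        (∏ i, p i (x i)) * (∏ i, Q i (x i) (y i)) * ∑ i, g i (x i) (y i)
      = ∑ x : ι → J, ∑ i, ∑ y : ι → K,
          (∏ i, p i (x i)) * (∏ i, Q i (x i) (y i)) * g i (x i) (y i) := by
        simp only [mul_sum]; exact sum_congr rfl fun x _ => sum_comm
    _ = ∑ i, ∑ j, ∑ k, p i j * Q i j k * g i j k := by
        rw [sum_comm]; exact sum_congr rfl fun i _ => hmarginal i

end ProductSums

section BlahutArimoto

open Real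

variable {ι J K : Type} [Fintype K]

lemma BAQ_pos (s : ℝ) (δ : J → K → ℝ) {q : K → ℝ} (hq : ∀ k, 0 < q k) (j : J) (k : K) :
    0 < BAQ s δ q j k :=
  have hterm : ∀ k, 0 < q k * exp (s * δ j k) := fun k => mul_pos (hq k) (exp_pos _)
  div_pos (hterm k) (sum_pos (fun k _ => hterm k) ⟨k, mem_univ k⟩)

lemma sum_BAQ [Nonempty K] (s : ℝ) (δ : J → K → ℝ) {q : K → ℝ} (hq : ∀ k, 0 < q k) (j : J) :
    ∑ k, BAQ s δ q j k = 1 := by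
  simp only [BAQ, ← sum_div]
  exact div_self (sum_pos (fun k _ => mul_pos (hq k) (exp_pos _)) univ_nonempty).ne'

variable [Fintype ι] [DecidableEq ι]

lemma BAQ_pi (s : ℝ) (δ : ι → J → K → ℝ) (q : ι → K → ℝ) :
    BAQ s (fun (x : ι → J) (y : ι → K) => ∑ i, δ i (x i) (y i))
        (fun y : ι → K => ∏ i, q i (y i))
      = fun x y => ∏ i, BAQ s (δ i) (q i) (x i) (y i) := by
  funext x y
  have hexp : ∀ y : ι → K,
      exp (s * ∑ i, δ i (x i) (y i)) = ∏ i, exp (s * δ i (x i) (y i)) := fun y => by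
    rw [mul_sum, exp_sum]
  simp only [BAQ, hexp, sum_pi_prod_mul_prod q fun i k => exp (s * δ i (x i) k)]
  rw [← prod_mul_distrib, prod_div_distrib]

variable [Fintype J]

lemma BAiter_pos [Nonempty J] {p : J → ℝ} {s : ℝ} {δ : J → K → ℝ} {q0 : K → ℝ}
    (hp : ∀ j, 0 < p j) (hq0 : ∀ k, 0 < q0 k) : ∀ t k, 0 < BAiter p s δ q0 t k
  | 0 => hq0
  | t + 1 => fun k =>
    sum_pos (fun j _ => mul_pos (hp j) (BAQ_pos s δ (BAiter_pos hp hq0 t) j k)) univ_nonempty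

lemma BAq_pi (p : ι → J → ℝ) (s : ℝ) (δ : ι → J → K → ℝ) (q : ι → K → ℝ) :
    BAq (fun x : ι → J => ∏ i, p i (x i)) s
        (fun (x : ι → J) (y : ι → K) => ∑ i, δ i (x i) (y i)) (fun y : ι → K => ∏ i, q i (y i))
      = fun y : ι → K => ∏ i, BAq (p i) s (δ i) (q i) (y i) := by
  funext y
  simp only [BAq, BAQ_pi]
  exact sum_pi_prod_mul_prod p fun i j => BAQ s (δ i) (q i) j (y i)

lemma BAiter_pi (p : ι → J → ℝ) (s : ℝ) (δ : ι → J → K → ℝ) (q0 : ι → K → ℝ) :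
    ∀ t, BAiter (fun x : ι → J => ∏ i, p i (x i)) s
        (fun (x : ι → J) (y : ι → K) => ∑ i, δ i (x i) (y i)) (fun y : ι → K => ∏ i, q0 i (y i)) t
      = fun y : ι → K => ∏ i, BAiter (p i) s (δ i) (q0 i) t (y i)
  | 0 => rfl
  | t + 1 => by rw [BAiter, BAiter_pi p s δ q0 t, BAq_pi]; rfl

end BlahutArimoto

section RateDistortion

variable {ι J K : Type} [Fintype J] [Fintype K]

-- `R_s` and `D_s` of a source `p` and a test channel `Q`
noncomputable def testChannelRate (p : J → ℝ) (Q : J → K → ℝ) : ℝ :=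
  ∑ j, ∑ k, p j * Q j k * Real.log (Q j k / ∑ j', p j' * Q j' k)

def testChannelDistortion (p : J → ℝ) (Q δ : J → K → ℝ) : ℝ :=
  ∑ j, ∑ k, p j * Q j k * δ j k

variable [Fintype ι] [DecidableEq ι]

lemma testChannelDistortion_pi (p : ι → J → ℝ) (Q δ : ι → J → K → ℝ)
    (hp : ∀ i, ∑ j, p i j = 1) (hQ : ∀ i j, ∑ k, Q i j k = 1) :
    testChannelDistortion (fun x : ι → J => ∏ i, p i (x i))
        (fun (x : ι → J) (y : ι → K) => ∏ i, Q i (x i) (y i))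
        (fun (x : ι → J) (y : ι → K) => ∑ i, δ i (x i) (y i))
      = ∑ i, testChannelDistortion (p i) (Q i) (δ i) :=
  sum_pi_pi_prod_mul_prod_mul_sum p Q hp hQ δ

lemma testChannelRate_pi (p : ι → J → ℝ) (Q : ι → J → K → ℝ) (hp_pos : ∀ i j, 0 < p i j)
    (hp : ∀ i, ∑ j, p i j = 1) (hQ_pos : ∀ i j k, 0 < Q i j k) (hQ : ∀ i j, ∑ k, Q i j k = 1) :
    testChannelRate (fun x : ι → J => ∏ i, p i (x i))
        (fun (x : ι → J) (y : ι → K) => ∏ i, Q i (x i) (y i))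
      = ∑ i, testChannelRate (p i) (Q i) := by
  have hlog : ∀ (x : ι → J) (y : ι → K),
      Real.log ((∏ i, Q i (x i) (y i)) /
          ∑ x' : ι → J, (∏ i, p i (x' i)) * ∏ i, Q i (x' i) (y i))
        = ∑ i, Real.log (Q i (x i) (y i) / ∑ j, p i j * Q i j (y i)) := fun x y => by
    have hmarginal : ∀ i, 0 < ∑ j, p i j * Q i j (y i) := fun i =>
      sum_pos (fun j _ => mul_pos (hp_pos i j) (hQ_pos i j (y i))) ⟨x i, mem_univ _⟩
    rw [sum_pi_prod_mul_prod p fun i j => Q i j (y i), ← prod_div_distrib,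
      Real.log_prod fun i _ => (div_pos (hQ_pos i (x i) (y i)) (hmarginal i)).ne']
  unfold testChannelRate
  simp only [hlog]
  exact sum_pi_pi_prod_mul_prod_mul_sum p Q hp hQ fun i j k =>
    Real.log (Q i j k / ∑ j', p i j' * Q i j' k)

end RateDistortion

open Finset in
theorem stmt_4_general (n : ℕ) (J K : Type) [Fintype J] [Fintype K]
    (p : Fin n → J → ℝ) (δ : Fin n → J → K → ℝ) (s : ℝ)
    (q0 : Fin n → K → ℝ)
    (hp : ∀ i j, 0 < p i j) (hps : ∀ i, ∑ j, p i j = 1)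
    (hq0 : ∀ i k, 0 < q0 i k) (hq0s : ∀ i, ∑ k, q0 i k = 1) :
    ∀ t : ℕ,
      (BAiter (fun Jv : Fin n → J => ∏ i, p i (Jv i)) s
          (fun (Jv : Fin n → J) (Kv : Fin n → K) => ∑ i, δ i (Jv i) (Kv i))
          (fun Kv : Fin n → K => ∏ i, q0 i (Kv i)) t
        = fun Kv => ∏ i, BAiter (p i) s (δ i) (q0 i) t (Kv i)) ∧
      (BAQ s (fun (Jv : Fin n → J) (Kv : Fin n → K) => ∑ i, δ i (Jv i) (Kv i))
          (BAiter (fun Jv : Fin n → J => ∏ i, p i (Jv i)) s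
            (fun (Jv : Fin n → J) (Kv : Fin n → K) => ∑ i, δ i (Jv i) (Kv i))
            (fun Kv : Fin n → K => ∏ i, q0 i (Kv i)) t)
        = fun Jv Kv => ∏ i, BAQ s (δ i) (BAiter (p i) s (δ i) (q0 i) t) (Jv i) (Kv i)) ∧
      (∑ Jv : Fin n → J, ∑ Kv : Fin n → K,
          (∏ i, p i (Jv i)) *
            (∏ i, BAQ s (δ i) (BAiter (p i) s (δ i) (q0 i) t) (Jv i) (Kv i)) *
            Real.log ((∏ i, BAQ s (δ i) (BAiter (p i) s (δ i) (q0 i) t) (Jv i) (Kv i)) /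
              ∑ Jv' : Fin n → J, (∏ i, p i (Jv' i)) *
                ∏ i, BAQ s (δ i) (BAiter (p i) s (δ i) (q0 i) t) (Jv' i) (Kv i))
        = ∑ i, ∑ j, ∑ k,
            p i j * BAQ s (δ i) (BAiter (p i) s (δ i) (q0 i) t) j k *
              Real.log (BAQ s (δ i) (BAiter (p i) s (δ i) (q0 i) t) j k /
                ∑ j', p i j' * BAQ s (δ i) (BAiter (p i) s (δ i) (q0 i) t) j' k)) ∧
      (∑ Jv : Fin n → J, ∑ Kv : Fin n → K,
          (∏ i, p i (Jv i)) *
            (∏ i, BAQ s (δ i) (BAiter (p i) s (δ i) (q0 i) t) (Jv i) (Kv i)) *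
            (∑ i, δ i (Jv i) (Kv i))
        = ∑ i, ∑ j, ∑ k,
            p i j * BAQ s (δ i) (BAiter (p i) s (δ i) (q0 i) t) j k * δ i j k) := by
  intro t
  have hnonempty : ∀ i, Nonempty J ∧ Nonempty K := fun i => by
    obtain ⟨j, -, -⟩ := exists_ne_zero_of_sum_ne_zero ((hps i).trans_ne one_ne_zero)
    obtain ⟨k, -, -⟩ := exists_ne_zero_of_sum_ne_zero ((hq0s i).trans_ne one_ne_zero)
    exact ⟨⟨j⟩, ⟨k⟩⟩
  have hiter_pos : ∀ i k, 0 < BAiter (p i) s (δ i) (q0 i) t k := fun i =>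
    have := (hnonempty i).1
    BAiter_pos (hp i) (hq0 i) t
  have hQ_pos : ∀ i j k, 0 < BAQ s (δ i) (BAiter (p i) s (δ i) (q0 i) t) j k := fun i =>
    BAQ_pos s (δ i) (hiter_pos i)
  have hQ_sum : ∀ i j, ∑ k, BAQ s (δ i) (BAiter (p i) s (δ i) (q0 i) t) j k = 1 := fun i =>
    have := (hnonempty i).2
    sum_BAQ s (δ i) (hiter_pos i)
  refine ⟨BAiter_pi p s δ q0 t, ?_, testChannelRate_pi p _ hp hps hQ_pos hQ_sum,
    testChannelDistortion_pi p _ δ hps hQ_sum⟩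
  rw [BAiter_pi]
  exact BAQ_pi s δ _

open Finset in
/-- Factored Blahut–Arimoto: for `n` independent sources `p i` with
per-component distortions `δ i`, parameter `s < 0`, and a factorized initial
test-channel input distribution `q0J = Π_i q0 i`, every Blahut–Arimoto iterate of the
product source factorizes (`q^{(t)}_K = Π_i q^{(t)}_{k_i}` and
`Q^{(t)}_{K|J} = Π_i Q^{(t)}_{k_i|j_i}`), and consequently the rate and the distortion
of the product source are the sums of the component rates and distortions. -/
theorem stmt_4 (n : ℕ) (J K : Type) [Fintype J] [Fintype K]
    (p : Fin n → J → ℝ) (δ : Fin n → J → K → ℝ) (s : ℝ) (hs : s < 0)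
    (q0 : Fin n → K → ℝ)
    (hp : ∀ i j, 0 < p i j) (hps : ∀ i, ∑ j, p i j = 1)
    (hq0 : ∀ i k, 0 < q0 i k) (hq0s : ∀ i, ∑ k, q0 i k = 1) :
    ∀ t : ℕ,
      (BAiter (fun Jv : Fin n → J => ∏ i, p i (Jv i)) s
          (fun (Jv : Fin n → J) (Kv : Fin n → K) => ∑ i, δ i (Jv i) (Kv i))
          (fun Kv : Fin n → K => ∏ i, q0 i (Kv i)) t
        = fun Kv => ∏ i, BAiter (p i) s (δ i) (q0 i) t (Kv i)) ∧
      (BAQ s (fun (Jv : Fin n → J) (Kv : Fin n → K) => ∑ i, δ i (Jv i) (Kv i))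
          (BAiter (fun Jv : Fin n → J => ∏ i, p i (Jv i)) s
            (fun (Jv : Fin n → J) (Kv : Fin n → K) => ∑ i, δ i (Jv i) (Kv i))
            (fun Kv : Fin n → K => ∏ i, q0 i (Kv i)) t)
        = fun Jv Kv => ∏ i, BAQ s (δ i) (BAiter (p i) s (δ i) (q0 i) t) (Jv i) (Kv i)) ∧
      (∑ Jv : Fin n → J, ∑ Kv : Fin n → K,
          (∏ i, p i (Jv i)) *
            (∏ i, BAQ s (δ i) (BAiter (p i) s (δ i) (q0 i) t) (Jv i) (Kv i)) *
            Real.log ((∏ i, BAQ s (δ i) (BAiter (p i) s (δ i) (q0 i) t) (Jv i) (Kv i)) /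
              ∑ Jv' : Fin n → J, (∏ i, p i (Jv' i)) *
                ∏ i, BAQ s (δ i) (BAiter (p i) s (δ i) (q0 i) t) (Jv' i) (Kv i))
        = ∑ i, ∑ j, ∑ k,
            p i j * BAQ s (δ i) (BAiter (p i) s (δ i) (q0 i) t) j k *
              Real.log (BAQ s (δ i) (BAiter (p i) s (δ i) (q0 i) t) j k /
                ∑ j', p i j' * BAQ s (δ i) (BAiter (p i) s (δ i) (q0 i) t) j' k)) ∧
      (∑ Jv : Fin n → J, ∑ Kv : Fin n → K,
          (∏ i, p i (Jv i)) *
            (∏ i, BAQ s (δ i) (BAiter (p i) s (δ i) (q0 i) t) (Jv i) (Kv i)) *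
            (∑ i, δ i (Jv i) (Kv i))
        = ∑ i, ∑ j, ∑ k,
            p i j * BAQ s (δ i) (BAiter (p i) s (δ i) (q0 i) t) j k * δ i j k) :=
  stmt_4_general n J K p δ s q0 hp hps hq0 hq0s
end

section
/- Let A(m,l) denote the set of multiplicity types (m_1,...,m_l) of nonnegative integers with Σ_r m_r ≤ m and Σ_r m_r(m - m_r) ≤ (m+1)(|{r : m_r ≠ 0}| - 1) min_{r : m_r ≠ 0} m_r (with the convention that the min over the empty set is 0), and let the contribution of a column of type (m_1,...,m_l) to the cost be (1/2) Σ_r m_r(m_r+1). Then for any (m_1,...,m_l) ∈ A(m,l) with exactly one nonzero entry and any index r with m_r ≠ 0, (m+1)·m_r ≤ Σ_{r'} m_{r'}(m_{r'}+1); and in general, 2C ≥ (m+1)S holds for any multiplicity matrix all of whose columns are in A(m,l), where S is the score (the true-symbol multiplicity summed over columns, the true symbol being any symbol) and C is the cost. -/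
/-- Minimum of the nonzero entries of a multiplicity type, with the convention
that the minimum over the empty set is `0` (using `sInf ∅ = 0` on `ℕ`). -/
noncomputable def minNZ {l : ℕ} (M : Fin l → ℕ) : ℕ :=
  sInf {v | ∃ r, M r ≠ 0 ∧ v = M r}

/-- The allowable set `A(m,l)` of multiplicity types `(m_1,…,m_l)`:
`Σ m_r ≤ m` and `Σ m_r (m - m_r) ≤ (m+1)(|{r : m_r ≠ 0}| - 1) · min_{r : m_r ≠ 0} m_r`. -/
def allowable (m l : ℕ) (M : Fin l → ℕ) : Prop :=
  (∑ r, M r) ≤ m ∧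
    (∑ r, M r * (m - M r)) ≤
      (m + 1) * ((Finset.univ.filter fun r => M r ≠ 0).card - 1) * minNZ M

lemma minNZ_le {l : ℕ} (M : Fin l → ℕ) (r : Fin l) (hr : M r ≠ 0) : minNZ M ≤ M r :=
  Nat.sInf_le ⟨r, hr, rfl⟩

lemma col_le (m l : ℕ) (M : Fin l → ℕ) (h : allowable m l M) (s : Fin l) :
    (m + 1) * M s ≤ ∑ r, M r * (M r + 1) := by
  by_cases hs : M s = 0
  · simp [hs]
  obtain ⟨h1, h2⟩ := h
  set K := Finset.univ.filter fun r => M r ≠ 0 with hK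
  set μ := minNZ M with hμ
  have hsK : s ∈ K := by simp [hK, hs]
  -- Fact A : (k-1) * μ + M s ≤ ∑ M
  have hsumK : ∑ r ∈ K, M r = ∑ r, M r := by
    apply Finset.sum_filter_of_ne
    intro x _ hx
    intro h0
    exact hx (by simp [h0])
  have herase : (K.erase s).card * μ ≤ ∑ r ∈ K.erase s, M r := by
    calc (K.erase s).card * μ = ∑ _r ∈ K.erase s, μ := by
          rw [Finset.sum_const, smul_eq_mul]
      _ ≤ ∑ r ∈ K.erase s, M r := by
          apply Finset.sum_le_sum
          intro r hr
          have : M r ≠ 0 := by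
            have := Finset.mem_of_mem_erase hr
            simpa [hK] using this
          exact minNZ_le M r this
  have hA : (K.card - 1) * μ + M s ≤ ∑ r, M r := by
    have hcard : (K.erase s).card = K.card - 1 := Finset.card_erase_of_mem hsK
    have : M s + ∑ r ∈ K.erase s, M r = ∑ r ∈ K, M r := Finset.add_sum_erase K M hsK
    rw [hcard] at herase
    omega
  -- Fact B : m * ∑ M = ∑ M r * (m - M r) + ∑ M r * M r
  have hB : m * ∑ r, M r = (∑ r, M r * (m - M r)) + ∑ r, M r * M r := by
    rw [Finset.mul_sum, ← Finset.sum_add_distrib]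
    apply Finset.sum_congr rfl
    intro r _
    have hle : M r ≤ m := le_trans (Finset.single_le_sum (fun _ _ => Nat.zero_le _)
      (Finset.mem_univ r)) h1
    have : M r * (m - M r) + M r * M r = M r * ((m - M r) + M r) := by ring
    rw [this, Nat.sub_add_cancel hle, mul_comm]
  have hgoal : ∑ r, M r * (M r + 1) = (∑ r, M r * M r) + ∑ r, M r := by
    rw [← Finset.sum_add_distrib]
    apply Finset.sum_congr rfl
    intro r _
    ring
  rw [hgoal]
  -- final arithmetic
  have key : (m + 1) * ((K.card - 1) * μ + M s) ≤ (m + 1) * ∑ r, M r :=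
    Nat.mul_le_mul_left _ hA
  have expand : (m + 1) * ∑ r, M r = m * (∑ r, M r) + ∑ r, M r := by ring
  rw [expand, hB] at key
  have h2' : (∑ r, M r * (m - M r)) ≤ (m + 1) * ((K.card - 1) * μ) := by
    calc (∑ r, M r * (m - M r)) ≤ (m + 1) * (K.card - 1) * μ := h2
      _ = (m + 1) * ((K.card - 1) * μ) := by ring
  have : (m + 1) * ((K.card - 1) * μ) + (m + 1) * M s ≤
      (m + 1) * ((K.card - 1) * μ) + ((∑ r, M r * M r) + ∑ r, M r) := by
    calc (m + 1) * ((K.card - 1) * μ) + (m + 1) * M s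
        = (m + 1) * ((K.card - 1) * μ + M s) := by ring
      _ ≤ (∑ r, M r * (m - M r)) + (∑ r, M r * M r) + ∑ r, M r := key
      _ ≤ (m + 1) * ((K.card - 1) * μ) + ((∑ r, M r * M r) + ∑ r, M r) := by omega
  omega

/-- For any multiplicity matrix all of whose columns are in `A(m,l)`,
`2C ≥ (m+1)S`, where the score `S = Σ_i M_i(c_i)` (the true symbol `c i` being any
symbol) and the cost `C = (1/2) Σ_i Σ_r M_i r (M_i r + 1)`. -/
theorem stmt_7 (m l n : ℕ) (hm : 1 ≤ m) (hl : 1 ≤ l)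
    (M : Fin n → Fin l → ℕ) (hM : ∀ i, allowable m l (M i)) (c : Fin n → Fin l) :
    (m + 1) * (∑ i, M i (c i)) ≤ ∑ i, ∑ r, M i r * (M i r + 1) := by
  rw [Finset.mul_sum]
  exact Finset.sum_le_sum fun i _ => col_le m l (M i) (hM i) (c i)
end

section
/- Let m ≥ 1. For any integer a with a(k-1) < S ≤ (a+1)(k-1) satisfying (a+1)[S - (a/2)(k-1)] > C, where S ≤ mn and C ≥ ((m+1)/2)S, and the rate constraint k/n ≥ 1/n + m(m+3)/((m+1)(m+2)) holds, one has a = m. -/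
/-- let `m ≥ 1` and suppose `a ∈ ℕ` satisfies `a(k−1) < S ≤ (a+1)(k−1)`
and the ASD success condition `(a+1)[S − (a/2)(k−1)] > C`, where `S ≤ mn`,
`2C ≥ (m+1)S`, and the rate constraint `k/n ≥ 1/n + m(m+3)/((m+1)(m+2))` holds.
Then `a = m`. -/
theorem stmt_8 (m n k : ℕ) (hm : 1 ≤ m) (hk : 1 ≤ k) (hkn : k < n)
    (S C : ℝ) (hS0 : 0 ≤ S) (hC0 : 0 ≤ C) (a : ℕ)
    (hS : S ≤ (m : ℝ) * n) (hCS : ((m : ℝ) + 1) * S ≤ 2 * C)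
    (ha1 : (a : ℝ) * ((k : ℝ) - 1) < S) (ha2 : S ≤ ((a : ℝ) + 1) * ((k : ℝ) - 1))
    (hsucc : ((a : ℝ) + 1) * (S - ((a : ℝ) / 2) * ((k : ℝ) - 1)) > C)
    (hrate : (k : ℝ) / n ≥ 1 / n + (m * (m + 3)) / ((m + 1) * (m + 2))) :
    a = m := by
  have hmR : (1:ℝ) ≤ (m:ℝ) := by exact_mod_cast hm
  have hkR : (1:ℝ) ≤ (k:ℝ) := by exact_mod_cast hk
  have hnR : (0:ℝ) < (n:ℝ) := by
    have : 0 < n := lt_of_le_of_lt (Nat.zero_le k) hkn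
    exact_mod_cast this
  have haR : (0:ℝ) ≤ (a:ℝ) := Nat.cast_nonneg a
  -- k - 1 > 0
  have hK : (0:ℝ) < (k:ℝ) - 1 := by
    rcases lt_or_ge 0 ((k:ℝ) - 1) with h | h
    · exact h
    · exfalso
      have hk0 : (k:ℝ) - 1 = 0 := le_antisymm h (by linarith)
      rw [hk0] at ha1 ha2
      simp at ha1 ha2
      linarith
  -- a ≥ 1
  have ha0 : 1 ≤ a := by
    by_contra h
    have : a = 0 := by omega
    subst this
    simp at ha1 hsucc
    nlinarith
  have haR1 : (1:ℝ) ≤ (a:ℝ) := by exact_mod_cast ha0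
  have hSpos : 0 < S := lt_of_le_of_lt (by nlinarith) ha1
  -- lower bound: m ≤ a
  have hma : m ≤ a := by
    by_contra h
    have h' : a + 1 ≤ m := by omega
    have h'' : (a:ℝ) + 1 ≤ (m:ℝ) := by exact_mod_cast h'
    nlinarith [mul_le_mul_of_nonneg_left ha2 haR]
  -- rate inequality cleared of denominators
  have hD : (0:ℝ) < ((m:ℝ) + 1) * ((m:ℝ) + 2) := by positivity
  have h1 : ((m:ℝ) * ((m:ℝ) + 3)) / (((m:ℝ) + 1) * ((m:ℝ) + 2)) ≤ ((k:ℝ) - 1) / n := by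
    rw [sub_div]
    linarith [hrate, (one_div (n:ℝ)) ▸ hrate]
  rw [div_le_div_iff₀ hD hnR] at h1
  -- upper bound: a ≤ m
  have ham : a ≤ m := by
    by_contra h
    have h' : m + 1 ≤ a := by omega
    have h'' : (m:ℝ) + 1 ≤ (a:ℝ) := by exact_mod_cast h'
    have A := mul_lt_mul_of_pos_left ha1 hD
    have B := mul_le_mul_of_nonneg_left h1 haR
    have Cc := mul_le_mul_of_nonneg_left hS (le_of_lt hD)
    have Dd := mul_le_mul_of_nonneg_right h'' (show (0:ℝ) ≤ (m:ℝ) * ((m:ℝ) + 3) * n by positivity)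
    have E : (0:ℝ) < (m:ℝ) * n := by positivity
    nlinarith [A, B, Cc, Dd, E, mul_pos E (show (0:ℝ) < (m:ℝ) by linarith)]
  omega
end

section
/- For the bit-level distortion δ(0,0)=1, δ(0,1)=3, δ(1,0)=1, δ(1,1)=0 and a binary source with Pr(x=1) = p, fix λ ∈ (0,1) and define R(λ) = H(p) − H((1+λ)/(1+λ+λ²)) + (p − (1+λ)/(1+λ+λ²))·H(λ/(1+λ)) and D(λ) = (1+2λ+3λ²)/(1+λ+λ²) − p(1+2λ)/(1+λ). Then, whenever R(λ) > 0, the pair (R(λ), D(λ)) lies on the rate-distortion curve, achieved by the test-channel input distribution q(x̂=0) = ((1+λ) − p(1+λ+λ²))/(1−λ²) and q(x̂=1) = (p(1+λ+λ²) − λ(1+λ))/(1−λ²), provided both of these are in [0,1]. -/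
/-- Mutual information `I(X;X̂)` for a source `P` on a finite alphabet and a test
channel `Q`. -/
noncomputable def MI {A B : Type} [Fintype A] [Fintype B]
    (P : A → ℝ) (Q : A → B → ℝ) : ℝ :=
  ∑ a, ∑ b, P a * Q a b * Real.log (Q a b / ∑ a', P a' * Q a' b)

/-- Rate-distortion function `R(D) = inf { I(X;X̂) : E[δ(X,X̂)] ≤ D }`. -/
noncomputable def RD {A B : Type} [Fintype A] [Fintype B]
    (P : A → ℝ) (δ : A → B → ℝ) (D : ℝ) : ℝ :=
  sInf {r | ∃ Q : A → B → ℝ, (∀ a b, 0 ≤ Q a b) ∧ (∀ a, ∑ b, Q a b = 1) ∧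
    (∑ a, ∑ b, P a * Q a b * δ a b) ≤ D ∧ r = MI P Q}

/-- The bit-level distortion `δ(0,0)=1, δ(0,1)=3, δ(1,0)=1, δ(1,1)=0`. -/
def bitDist : Fin 2 → Fin 2 → ℝ := ![![1, 3], ![1, 0]]

/-- The binary source with `Pr(x = 1) = p`. -/
noncomputable def srcP (p : ℝ) : Fin 2 → ℝ := ![1 - p, p]

/-!
For `s ≤ 0` and positive weights `ν` with `∑ₐ P(a) e^{s δ(a,b)} / ν(a) ≤ 1` for every `b`,
the inequality `log y ≤ y - 1`, applied termwise, gives the Lagrangian lower bound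
`I(X;X̂) ≥ s · E[δ] - ∑ₐ P(a) log ν(a)` for every test channel. The exponentially tilted
channel `Q(b|a) = q(b) e^{s δ(a,b)} / ν(a)`, with `ν` the partition function of `q`, attains
the bound as soon as its output marginal is `q`, so it solves the rate-distortion problem at
its own distortion level. For the bit-level distortion take `s = log λ`: the given `q` has
partition function `ν = (λ(1-p)(1+λ+λ²), p(1+λ+λ²)/(1+λ))`, for which the constraint on `ν`
holds with equality at both `b`; the tilted channel has distortion `D(λ)`, and the bound
evaluates to `R(λ)`.
-/

open Real Finset

lemma le_mul_mul_log_div {c q m x : ℝ} (hc : 0 ≤ c) (hq : 0 ≤ q) (hqm : c * q ≤ m)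
    (hx : 0 < x) : c * q * (log x + 1) - c * m * x ≤ c * q * log (q / m) := by
  rcases (mul_nonneg hc hq).eq_or_lt with h | h
  · have : 0 ≤ c * m * x := mul_nonneg (mul_nonneg hc (h ▸ hqm)) hx.le
    rw [← h]
    linarith
  · have hm : 0 < m := h.trans_le hqm
    have hq' : 0 < q := pos_of_mul_pos_right h hc
    have key := log_le_sub_one_of_pos (show 0 < m * x / q by positivity)
    rw [log_div (by positivity) hq'.ne', log_mul hm.ne' hx.ne'] at key
    rw [log_div hq'.ne' hm.ne']
    have hcancel : c * q * (m * x / q) = c * m * x := by field_simp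
    linarith [mul_le_mul_of_nonneg_left key h.le]

section MutualInformation

variable {A B : Type} [Fintype A] [Fintype B]

def avgDist (P : A → ℝ) (Q δ : A → B → ℝ) : ℝ :=
  ∑ a, ∑ b, P a * Q a b * δ a b

theorem sum_mul_log_le_MI {P : A → ℝ} {Q x : A → B → ℝ} (hP : ∀ a, 0 ≤ P a)
    (hQ : ∀ a b, 0 ≤ Q a b) (hx : ∀ a b, 0 < x a b) (hsum : ∀ b, ∑ a, P a * x a b ≤ 1) :
    ∑ a, ∑ b, P a * Q a b * log (x a b) ≤ MI P Q := by
  set m : B → ℝ := fun b => ∑ a, P a * Q a b with hm_def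
  have hPQ : ∀ a b, 0 ≤ P a * Q a b := fun a b => mul_nonneg (hP a) (hQ a b)
  have hslack : 0 ≤ ∑ b, m b * (1 - ∑ a, P a * x a b) :=
    sum_nonneg fun b _ => mul_nonneg (sum_nonneg fun a _ => hPQ a b) (sub_nonneg.2 (hsum b))
  have hregroup : ∑ b, m b * (1 - ∑ a, P a * x a b)
      = ∑ a, ∑ b, (P a * Q a b - P a * m b * x a b) := by
    simp only [mul_sub, mul_one, sum_sub_distrib, mul_sum, hm_def, sum_mul]
    rw [sum_comm (f := fun b a => P a * Q a b)]
    congr 1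
    rw [sum_comm]
    refine sum_congr rfl fun a _ => sum_congr rfl fun b _ => sum_congr rfl fun c _ => ?_
    ring
  calc ∑ a, ∑ b, P a * Q a b * log (x a b)
      ≤ ∑ a, ∑ b, P a * Q a b * log (x a b) + ∑ b, m b * (1 - ∑ a, P a * x a b) :=
        le_add_of_nonneg_right hslack
    _ = ∑ a, ∑ b, (P a * Q a b * (log (x a b) + 1) - P a * m b * x a b) := by
        rw [hregroup, ← sum_add_distrib]
        refine sum_congr rfl fun a _ => ?_
        rw [← sum_add_distrib]
        refine sum_congr rfl fun b _ => ?_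
        ring
    _ ≤ MI P Q :=
        sum_le_sum fun a _ => sum_le_sum fun b _ => le_mul_mul_log_div (hP a) (hQ a b)
          (single_le_sum (fun a _ => hPQ a b) (mem_univ a)) (hx a b)

theorem MI_eq_sum_mul_log_of_marginal {P : A → ℝ} {q : B → ℝ} {x : A → B → ℝ}
    (hmarg : ∀ b, ∑ a, P a * (q b * x a b) = q b) :
    MI P (fun a b => q b * x a b) = ∑ a, ∑ b, P a * (q b * x a b) * log (x a b) := by
  refine sum_congr rfl fun a _ => sum_congr rfl fun b _ => ?_
  rw [hmarg b]
  rcases eq_or_ne (q b) 0 with h | h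
  · simp [h]
  · rw [mul_div_cancel_left₀ _ h]

theorem sum_mul_log_exp_div {P : A → ℝ} {Q δ : A → B → ℝ} {ν : A → ℝ} (s : ℝ)
    (hQ : ∀ a, ∑ b, Q a b = 1) (hν : ∀ a, 0 < ν a) :
    ∑ a, ∑ b, P a * Q a b * log (exp (s * δ a b) / ν a)
      = s * avgDist P Q δ - ∑ a, P a * log (ν a) := by
  simp only [avgDist, mul_sum, ← sum_sub_distrib]
  refine sum_congr rfl fun a _ => ?_
  have hrow : ∑ b, P a * Q a b * log (ν a) = P a * log (ν a) := by
    rw [← sum_mul, ← mul_sum, hQ a, mul_one]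
  rw [← hrow, ← sum_sub_distrib]
  refine sum_congr rfl fun b _ => ?_
  rw [log_div (exp_pos _).ne' (hν a).ne', log_exp]
  ring

theorem lagrangian_le_MI {P : A → ℝ} {Q δ : A → B → ℝ} {ν : A → ℝ} {s D : ℝ}
    (hP : ∀ a, 0 ≤ P a) (hs : s ≤ 0) (hν : ∀ a, 0 < ν a)
    (hdual : ∀ b, ∑ a, P a * (exp (s * δ a b) / ν a) ≤ 1)
    (hQ : ∀ a b, 0 ≤ Q a b) (hrow : ∀ a, ∑ b, Q a b = 1) (hD : avgDist P Q δ ≤ D) :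
    s * D - ∑ a, P a * log (ν a) ≤ MI P Q :=
  calc s * D - ∑ a, P a * log (ν a) ≤ s * avgDist P Q δ - ∑ a, P a * log (ν a) :=
        sub_le_sub_right (mul_le_mul_of_nonpos_left hD hs) _
    _ = ∑ a, ∑ b, P a * Q a b * log (exp (s * δ a b) / ν a) :=
        (sum_mul_log_exp_div s hrow hν).symm
    _ ≤ MI P Q := sum_mul_log_le_MI hP hQ (fun a _ => div_pos (exp_pos _) (hν a)) hdual

end MutualInformation

noncomputable def partitionFn {A B : Type} [Fintype B] (q : B → ℝ) (s : ℝ) (δ : A → B → ℝ)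
    (a : A) : ℝ :=
  ∑ b, q b * exp (s * δ a b)

noncomputable def tiltedChannel {A B : Type} [Fintype B] (q : B → ℝ) (s : ℝ) (δ : A → B → ℝ)
    (a : A) (b : B) : ℝ :=
  q b * (exp (s * δ a b) / partitionFn q s δ a)

section TiltedChannel

variable {A B : Type} [Fintype B] {δ : A → B → ℝ} {q : B → ℝ} {s : ℝ}

theorem tiltedChannel_nonneg (hq : ∀ b, 0 ≤ q b) (hν : ∀ a, 0 < partitionFn q s δ a)
    (a : A) (b : B) : 0 ≤ tiltedChannel q s δ a b :=
  mul_nonneg (hq b) (div_pos (exp_pos _) (hν a)).le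

theorem sum_tiltedChannel (hν : ∀ a, 0 < partitionFn q s δ a) (a : A) :
    ∑ b, tiltedChannel q s δ a b = 1 := by
  simp only [tiltedChannel, ← mul_div_assoc, ← sum_div]
  exact div_self (hν a).ne'

variable [Fintype A] {P : A → ℝ}

theorem marginal_tiltedChannel
    (hdual : ∀ b, q b ≠ 0 → ∑ a, P a * (exp (s * δ a b) / partitionFn q s δ a) = 1) (b : B) :
    ∑ a, P a * tiltedChannel q s δ a b = q b := by
  rcases eq_or_ne (q b) 0 with h | h
  · simp [tiltedChannel, h]
  · simp only [tiltedChannel, mul_left_comm _ (q b), ← mul_sum, hdual b h, mul_one]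

theorem MI_tiltedChannel (hν : ∀ a, 0 < partitionFn q s δ a)
    (hdual : ∀ b, q b ≠ 0 → ∑ a, P a * (exp (s * δ a b) / partitionFn q s δ a) = 1) :
    MI P (tiltedChannel q s δ)
      = s * avgDist P (tiltedChannel q s δ) δ - ∑ a, P a * log (partitionFn q s δ a) := by
  rw [← sum_mul_log_exp_div s (sum_tiltedChannel hν) hν]
  exact MI_eq_sum_mul_log_of_marginal (marginal_tiltedChannel hdual)

theorem RD_avgDist_tiltedChannel (hP : ∀ a, 0 ≤ P a) (hs : s ≤ 0) (hq : ∀ b, 0 ≤ q b)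
    (hν : ∀ a, 0 < partitionFn q s δ a)
    (hdual_le : ∀ b, ∑ a, P a * (exp (s * δ a b) / partitionFn q s δ a) ≤ 1)
    (hdual : ∀ b, q b ≠ 0 → ∑ a, P a * (exp (s * δ a b) / partitionFn q s δ a) = 1) :
    RD P δ (avgDist P (tiltedChannel q s δ) δ)
      = s * avgDist P (tiltedChannel q s δ) δ - ∑ a, P a * log (partitionFn q s δ a) := by
  refine IsLeast.csInf_eq ⟨⟨tiltedChannel q s δ, tiltedChannel_nonneg hq hν,
    sum_tiltedChannel hν, le_rfl, (MI_tiltedChannel hν hdual).symm⟩, ?_⟩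
  rintro r ⟨Q, hQ, hrow, hD, rfl⟩
  exact lagrangian_le_MI hP hs hν hdual_le hQ hrow hD

end TiltedChannel

noncomputable def bitQ (p lam : ℝ) : Fin 2 → ℝ :=
  ![((1 + lam) - p * (1 + lam + lam ^ 2)) / (1 - lam ^ 2),
    (p * (1 + lam + lam ^ 2) - lam * (1 + lam)) / (1 - lam ^ 2)]

section BitLevel

variable {p lam : ℝ}

lemma exp_log_mul_bitDist (hl : 0 < lam) (a b : Fin 2) :
    exp (log lam * bitDist a b) = ![![lam, lam ^ 3], ![lam, 1]] a b := by
  rw [← rpow_def_of_pos hl]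
  fin_cases a <;> fin_cases b <;> simp [bitDist]

lemma partitionFn_bitQ (hl0 : 0 < lam) (hl1 : lam < 1) :
    partitionFn (bitQ p lam) (log lam) bitDist
      = ![lam * ((1 - p) * (1 + lam + lam ^ 2)), p * (1 + lam + lam ^ 2) / (1 + lam)] := by
  have : 1 - lam ^ 2 ≠ 0 := by nlinarith
  have : 1 + lam ≠ 0 := by linarith
  ext a
  fin_cases a <;> simp [partitionFn, Fin.sum_univ_two, exp_log_mul_bitDist hl0, bitQ] <;>
    (field_simp; ring)

lemma partitionFn_bitQ_pos (hp0 : 0 < p) (hp1 : p < 1) (hl0 : 0 < lam) (hl1 : lam < 1)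
    (a : Fin 2) : 0 < partitionFn (bitQ p lam) (log lam) bitDist a := by
  have : 0 < 1 - p := by linarith
  rw [partitionFn_bitQ hl0 hl1]
  fin_cases a <;> simp <;> positivity

lemma sum_srcP_mul_exp_div_partitionFn_bitQ (hp0 : 0 < p) (hp1 : p < 1) (hl0 : 0 < lam)
    (hl1 : lam < 1) (b : Fin 2) :
    ∑ a, srcP p a * (exp (log lam * bitDist a b) / partitionFn (bitQ p lam) (log lam) bitDist a)
      = 1 := by
  have : 1 - p ≠ 0 := by linarith
  have : 1 + lam ≠ 0 := by linarith
  have : 1 + lam + lam ^ 2 ≠ 0 := by positivity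
  simp only [partitionFn_bitQ hl0 hl1, exp_log_mul_bitDist hl0, Fin.sum_univ_two, srcP]
  fin_cases b <;> simp <;> (field_simp; ring)

lemma avgDist_tiltedChannel_bitQ (hp0 : 0 < p) (hp1 : p < 1) (hl0 : 0 < lam) (hl1 : lam < 1) :
    avgDist (srcP p) (tiltedChannel (bitQ p lam) (log lam) bitDist) bitDist
      = (1 + 2 * lam + 3 * lam ^ 2) / (1 + lam + lam ^ 2) - p * (1 + 2 * lam) / (1 + lam) := by
  have : 1 - p ≠ 0 := by linarith
  have : 1 + lam ≠ 0 := by linarith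
  have : 1 - lam ^ 2 ≠ 0 := by nlinarith
  have : 1 + lam + lam ^ 2 ≠ 0 := by positivity
  simp only [avgDist, tiltedChannel, partitionFn_bitQ hl0 hl1, exp_log_mul_bitDist hl0]
  simp [Fin.sum_univ_two, srcP, bitQ, bitDist]
  field_simp
  ring

lemma log_mul_sub_sum_srcP_mul_log_partitionFn_bitQ (hp0 : 0 < p) (hp1 : p < 1) (hl0 : 0 < lam)
    (hl1 : lam < 1) :
    log lam * ((1 + 2 * lam + 3 * lam ^ 2) / (1 + lam + lam ^ 2) - p * (1 + 2 * lam) / (1 + lam))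
        - ∑ a, srcP p a * log (partitionFn (bitQ p lam) (log lam) bitDist a)
      = binEntropy p - binEntropy ((1 + lam) / (1 + lam + lam ^ 2))
          + (p - (1 + lam) / (1 + lam + lam ^ 2)) * binEntropy (lam / (1 + lam)) := by
  have h1p : 1 - p ≠ 0 := by linarith
  have h1l : 1 + lam ≠ 0 := by linarith
  have hS : 1 + lam + lam ^ 2 ≠ 0 := by positivity
  have hcompl₁ : 1 - (1 + lam) / (1 + lam + lam ^ 2) = lam ^ 2 / (1 + lam + lam ^ 2) := by
    field_simp; ring
  have hcompl₂ : 1 - lam / (1 + lam) = 1 / (1 + lam) := by field_simp; ring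
  simp only [partitionFn_bitQ hl0 hl1, Fin.sum_univ_two, srcP, Matrix.cons_val_zero,
    Matrix.cons_val_one, binEntropy_eq_negMulLog_add_negMulLog_one_sub,
    negMulLog, hcompl₁, hcompl₂]
  rw [log_div h1l hS, log_div (by positivity) hS, log_div hl0.ne' h1l, log_div one_ne_zero h1l,
    log_mul hl0.ne' (by positivity), log_mul h1p hS, log_div (by positivity) h1l,
    log_mul hp0.ne' hS, log_pow, log_one]
  push_cast
  field_simp
  ring

end BitLevel

theorem stmt_14_general (p lam : ℝ) (hp0 : 0 < p) (hp1 : p < 1)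
    (hl0 : 0 < lam) (hl1 : lam < 1)
    (hq0a : 0 ≤ ((1 + lam) - p * (1 + lam + lam ^ 2)) / (1 - lam ^ 2))
    (hq1a : 0 ≤ (p * (1 + lam + lam ^ 2) - lam * (1 + lam)) / (1 - lam ^ 2)) :
    RD (srcP p) bitDist
        ((1 + 2 * lam + 3 * lam ^ 2) / (1 + lam + lam ^ 2) - p * (1 + 2 * lam) / (1 + lam))
      = Real.binEntropy p - Real.binEntropy ((1 + lam) / (1 + lam + lam ^ 2))
          + (p - (1 + lam) / (1 + lam + lam ^ 2)) * Real.binEntropy (lam / (1 + lam)) ∧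
    ∃ Q : Fin 2 → Fin 2 → ℝ, (∀ a b, 0 ≤ Q a b) ∧ (∀ a, ∑ b, Q a b = 1) ∧
      (∑ a, ∑ b, srcP p a * Q a b * bitDist a b)
          ≤ (1 + 2 * lam + 3 * lam ^ 2) / (1 + lam + lam ^ 2)
              - p * (1 + 2 * lam) / (1 + lam) ∧
      MI (srcP p) Q
          = Real.binEntropy p - Real.binEntropy ((1 + lam) / (1 + lam + lam ^ 2))
              + (p - (1 + lam) / (1 + lam + lam ^ 2)) * Real.binEntropy (lam / (1 + lam)) ∧
      (∑ a, srcP p a * Q a 0 = ((1 + lam) - p * (1 + lam + lam ^ 2)) / (1 - lam ^ 2)) ∧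
      (∑ a, srcP p a * Q a 1 = (p * (1 + lam + lam ^ 2) - lam * (1 + lam)) / (1 - lam ^ 2)) := by
  have hP : ∀ a, 0 ≤ srcP p a := by
    intro a; fin_cases a <;> simp [srcP] <;> linarith
  have hq : ∀ b, 0 ≤ bitQ p lam b := by
    intro b; fin_cases b; exacts [hq0a, hq1a]
  have hs : log lam ≤ 0 := log_nonpos hl0.le hl1.le
  have hν := partitionFn_bitQ_pos hp0 hp1 hl0 hl1
  have hdual := sum_srcP_mul_exp_div_partitionFn_bitQ hp0 hp1 hl0 hl1
  have hmarg : ∀ b, ∑ a, srcP p a * tiltedChannel (bitQ p lam) (log lam) bitDist a b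
      = bitQ p lam b := marginal_tiltedChannel fun b _ => hdual b
  rw [← log_mul_sub_sum_srcP_mul_log_partitionFn_bitQ hp0 hp1 hl0 hl1,
    ← avgDist_tiltedChannel_bitQ hp0 hp1 hl0 hl1]
  exact ⟨RD_avgDist_tiltedChannel hP hs hq hν (fun b => (hdual b).le) fun b _ => hdual b,
    tiltedChannel (bitQ p lam) (log lam) bitDist, tiltedChannel_nonneg hq hν,
    sum_tiltedChannel hν, le_rfl, MI_tiltedChannel hν fun b _ => hdual b, hmarg 0, hmarg 1⟩

/-- for the bit-level distortion and λ ∈ (0,1), let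
`R(λ) = H(p) − H((1+λ)/(1+λ+λ²)) + (p − (1+λ)/(1+λ+λ²))·H(λ/(1+λ))` and
`D(λ) = (1+2λ+3λ²)/(1+λ+λ²) − p(1+2λ)/(1+λ)`. If `R(λ) > 0` and the test-channel
input distribution `q(x̂=0) = ((1+λ) − p(1+λ+λ²))/(1−λ²)`,
`q(x̂=1) = (p(1+λ+λ²) − λ(1+λ))/(1−λ²)` has both entries in `[0,1]`, then
`(R(λ), D(λ))` lies on the rate-distortion curve and is achieved by a test channel
with that reproduction marginal. -/
theorem stmt_14 (p lam : ℝ) (hp0 : 0 < p) (hp1 : p < 1)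
    (hl0 : 0 < lam) (hl1 : lam < 1)
    (hR : 0 < Real.binEntropy p - Real.binEntropy ((1 + lam) / (1 + lam + lam ^ 2))
        + (p - (1 + lam) / (1 + lam + lam ^ 2)) * Real.binEntropy (lam / (1 + lam)))
    (hq0a : 0 ≤ ((1 + lam) - p * (1 + lam + lam ^ 2)) / (1 - lam ^ 2))
    (hq0b : ((1 + lam) - p * (1 + lam + lam ^ 2)) / (1 - lam ^ 2) ≤ 1)
    (hq1a : 0 ≤ (p * (1 + lam + lam ^ 2) - lam * (1 + lam)) / (1 - lam ^ 2))
    (hq1b : (p * (1 + lam + lam ^ 2) - lam * (1 + lam)) / (1 - lam ^ 2) ≤ 1) :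
    RD (srcP p) bitDist
        ((1 + 2 * lam + 3 * lam ^ 2) / (1 + lam + lam ^ 2) - p * (1 + 2 * lam) / (1 + lam))
      = Real.binEntropy p - Real.binEntropy ((1 + lam) / (1 + lam + lam ^ 2))
          + (p - (1 + lam) / (1 + lam + lam ^ 2)) * Real.binEntropy (lam / (1 + lam)) ∧
    ∃ Q : Fin 2 → Fin 2 → ℝ, (∀ a b, 0 ≤ Q a b) ∧ (∀ a, ∑ b, Q a b = 1) ∧
      (∑ a, ∑ b, srcP p a * Q a b * bitDist a b)
          ≤ (1 + 2 * lam + 3 * lam ^ 2) / (1 + lam + lam ^ 2)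
              - p * (1 + 2 * lam) / (1 + lam) ∧
      MI (srcP p) Q
          = Real.binEntropy p - Real.binEntropy ((1 + lam) / (1 + lam + lam ^ 2))
              + (p - (1 + lam) / (1 + lam + lam ^ 2)) * Real.binEntropy (lam / (1 + lam)) ∧
      (∑ a, srcP p a * Q a 0 = ((1 + lam) - p * (1 + lam + lam ^ 2)) / (1 - lam ^ 2)) ∧
      (∑ a, srcP p a * Q a 1 = (p * (1 + lam + lam ^ 2) - lam * (1 + lam)) / (1 - lam ^ 2)) :=
  stmt_14_general p lam hp0 hp1 hl0 hl1 hq0a hq1a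
end
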